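/- Let Θ be a compact subset of ℝ, ε > 0, and fix positive integers j, d₁,…,d_j with Σ_{i=1}^j d_i = d. Then there exist constants c > 0 and C > 0 such that for every ε-separated vector (θ₁,…,θ_j) ∈ Θ^j (meaning |θ_i − θ_{i'}| ≥ ε for all i ≠ i') and every vector Λ ∈ ℝ^d, c‖Λ‖ ≤ ‖A(θ₁,…,θ_j) Λ‖ ≤ C‖Λ‖, where ‖·‖ is the Euclidean norm on ℝ^d. -/

import Mathlib

/-!
If `μᵀ A(θ) = 0`, the polynomial `∑ₖ μₖ Xᵏ / k!` of degree `< d` has, at each `θᵢ`, vanishing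
derivatives of orders `< dᵢ`, so it is divisible by `∏ (X - θᵢ)^dᵢ`, of degree `d`, and must
vanish. Hence `A(θ)` is invertible whenever the `θᵢ` are distinct. The `ε`-separated points of
`Θʲ` form a compact set of such `θ`, and `(θ, v) ↦ ‖A(θ) v‖` is continuous and positive on its
product with the unit sphere, so bounded above and away from zero there; homogeneity in `v`
gives both bounds.
-/

open Finset Polynomial Matrix Metric
open scoped Nat

namespace Polynomial

variable {K : Type*} [Field K] [CharZero K]

theorem eq_zero_of_iterate_derivative_eval_eq_zero {ι : Type*} [Fintype ι] {θ : ι → K}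
    (hθ : Function.Injective θ) {m : ι → ℕ} {p : K[X]} (hp : p.degree < ↑(∑ i, m i))
    (h : ∀ i, ∀ ℓ < m i, (derivative^[ℓ] p).eval (θ i) = 0) : p = 0 := by
  by_contra hne
  have hdvd (i : ι) : (X - C (θ i)) ^ m i ∣ p := by
    refine (le_rootMultiplicity_iff hne).1 ?_
    obtain hm | hm := Nat.eq_zero_or_pos (m i)
    · simp [hm]
    · exact Nat.le_of_pred_lt <| lt_rootMultiplicity_of_isRoot_iterate_derivative hne
        fun ℓ hℓ => h i ℓ (by rw [Nat.le_pred_iff_lt hm] at hℓ; exact hℓ)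
  have hprod : ∏ i, (X - C (θ i)) ^ m i ∣ p :=
    Fintype.prod_dvd_of_coprime
      (fun i i' hii' => ((pairwise_coprime_X_sub_C hθ) hii').pow) hdvd
  have hdeg := degree_le_of_dvd hprod hne
  simp only [degree_prod, degree_pow, degree_X_sub_C, nsmul_eq_mul, mul_one] at hdeg
  push_cast at hdeg hp
  exact (hdeg.trans_lt hp).false

theorem eval_iterate_derivative_X_pow_div_factorial (k ℓ : ℕ) (t : K) :
    (derivative^[ℓ] (X ^ k : K[X])).eval t / k ! =
      if ℓ ≤ k then t ^ (k - ℓ) / (k - ℓ)! else 0 := by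
  rw [iterate_derivative_X_pow_eq_C_mul]
  split_ifs with hℓ
  · rw [← Nat.factorial_mul_descFactorial hℓ, eval_mul, eval_C, eval_pow, eval_X, Nat.cast_mul,
      mul_comm ((k - ℓ)! : K), mul_div_mul_left]
    exact Nat.cast_ne_zero.2 (Nat.descFactorial_pos.2 hℓ).ne'
  · simp [Nat.descFactorial_eq_zero_iff_lt.2 (not_le.1 hℓ)]

end Polynomial

theorem Matrix.linearIndependent_col_of_row {K m n : Type*} [Field K] [Fintype m] [Fintype n]
    {A : Matrix m n K} (hcard : Fintype.card m = Fintype.card n)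
    (h : LinearIndependent K A.row) : LinearIndependent K A.col := by
  rw [linearIndependent_iff_card_eq_finrank_span] at h ⊢
  rw [← hcard, h, Set.finrank, Set.finrank, ← Matrix.rank_eq_finrank_span_row,
    Matrix.rank_eq_finrank_span_cols]

section ConfluentVandermonde

variable {K : Type*} [Field K] {ι : Type*}

def confluentVandermonde (m : ι → ℕ) (D : ℕ) (θ : ι → K) :
    Matrix (Fin D) ((i : ι) × Fin (m i)) K :=
  Matrix.of fun k c =>
    if (c.2 : ℕ) ≤ (k : ℕ) then θ c.1 ^ ((k : ℕ) - (c.2 : ℕ)) / ((k : ℕ) - (c.2 : ℕ))! else 0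

variable [CharZero K] {m : ι → ℕ} {D : ℕ} {θ : ι → K}

theorem vecMul_confluentVandermonde_apply (μ : Fin D → K) (c : (i : ι) × Fin (m i)) :
    (μ ᵥ* confluentVandermonde m D θ) c =
      (derivative^[c.2] (∑ k : Fin D, C (μ k / (k : ℕ)!) * X ^ (k : ℕ))).eval (θ c.1) := by
  simp only [Matrix.vecMul, dotProduct, iterate_derivative_sum, eval_finsetSum,
    iterate_derivative_C_mul, eval_mul, eval_C, confluentVandermonde, Matrix.of_apply]
  refine Finset.sum_congr rfl fun k _ => ?_
  rw [← eval_iterate_derivative_X_pow_div_factorial, div_mul_comm, mul_comm]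

theorem linearIndependent_row_confluentVandermonde [Fintype ι] (hθ : Function.Injective θ)
    (hD : ∑ i, m i = D) : LinearIndependent K (confluentVandermonde m D θ).row := by
  rw [← Matrix.vecMul_injective_iff, ← Matrix.coe_vecMulLinear, injective_iff_map_eq_zero]
  intro μ hμ
  have hp : ∑ k : Fin D, C (μ k / (k : ℕ)!) * X ^ (k : ℕ) = 0 :=
    eq_zero_of_iterate_derivative_eval_eq_zero hθ (by rw [hD]; exact degree_sum_fin_lt _)
      fun i ℓ hℓ => by
        rw [← vecMul_confluentVandermonde_apply (c := ⟨i, ⟨ℓ, hℓ⟩⟩)]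
        exact congrFun hμ _
  funext k
  simpa [Fin.val_inj, Nat.factorial_ne_zero] using congrArg (coeff · k) hp

theorem mulVec_injective_confluentVandermonde [Fintype ι] (hθ : Function.Injective θ)
    (hD : ∑ i, m i = D) : Function.Injective (confluentVandermonde m D θ).mulVec := by
  rw [Matrix.mulVec_injective_iff]
  refine Matrix.linearIndependent_col_of_row ?_ (linearIndependent_row_confluentVandermonde hθ hD)
  simp [hD]

end ConfluentVandermonde

theorem continuous_confluentVandermonde {K ι : Type*} [Field K] [TopologicalSpace K]
    [IsTopologicalRing K] (m : ι → ℕ) (D : ℕ) :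
    Continuous (confluentVandermonde (K := K) m D) :=
  continuous_matrix fun k c => by
    simp only [confluentVandermonde, Matrix.of_apply]
    split_ifs
    · exact ((continuous_apply c.1).pow _).div_const _
    · exact continuous_const

theorem IsCompact.exists_pos_bounds_of_injective {X E F : Type*} [TopologicalSpace X]
    [NormedAddCommGroup E] [NormedSpace ℝ E] [ProperSpace E]
    [NormedAddCommGroup F] [NormedSpace ℝ F] {S : Set X} (hS : IsCompact S)
    (T : X → E →ₗ[ℝ] F) (hT : Continuous fun p : X × E => T p.1 p.2)
    (hinj : ∀ x ∈ S, Function.Injective (T x)) :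
    ∃ c C : ℝ, 0 < c ∧ 0 < C ∧ ∀ x ∈ S, ∀ v, c * ‖v‖ ≤ ‖T x v‖ ∧ ‖T x v‖ ≤ C * ‖v‖ := by
  have hcpt : IsCompact (S ×ˢ sphere (0 : E) 1) := hS.prod (isCompact_sphere 0 1)
  have hcont : ContinuousOn (fun p : X × E => ‖T p.1 p.2‖) (S ×ˢ sphere (0 : E) 1) :=
    hT.norm.continuousOn
  obtain ⟨c, hc, hcS⟩ := hcpt.exists_forall_le' hcont (a := 0) fun p hp =>
    norm_pos_iff.2 <| (map_ne_zero_iff _ (hinj _ hp.1)).2 (ne_zero_of_mem_unit_sphere ⟨_, hp.2⟩)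
  obtain ⟨C, hCS⟩ := hcpt.exists_bound_of_continuousOn hcont
  refine ⟨c, max C 1, hc, by positivity, fun x hx v => ?_⟩
  rcases eq_or_ne v 0 with rfl | hv
  · simp
  have hu : (x, ‖v‖⁻¹ • v) ∈ S ×ˢ sphere (0 : E) 1 :=
    ⟨hx, by simp [norm_smul, inv_mul_cancel₀ (norm_ne_zero_iff.2 hv)]⟩
  have hscale : ‖T x v‖ = ‖v‖ * ‖T x (‖v‖⁻¹ • v)‖ := by
    rw [map_smul, norm_smul, norm_inv, norm_norm, mul_inv_cancel_left₀ (norm_ne_zero_iff.2 hv)]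
  have hlow : c ≤ ‖T x (‖v‖⁻¹ • v)‖ := hcS _ hu
  have hup : ‖T x (‖v‖⁻¹ • v)‖ ≤ max C 1 :=
    (le_abs_self _).trans ((hCS _ hu).trans (le_max_left _ _))
  rw [hscale]
  exact ⟨by rw [mul_comm]; gcongr, by rw [mul_comm]; gcongr⟩

theorem isCompact_setOf_separated {α ι : Type*} [MetricSpace α] [Finite ι] {Θ : Set α}
    (hΘ : IsCompact Θ) (ε : ℝ) :
    IsCompact {θ : ι → α | (∀ i, θ i ∈ Θ) ∧ ∀ i i', i ≠ i' → ε ≤ dist (θ i) (θ i')} := by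
  refine (isCompact_univ_pi fun _ => hΘ).of_isClosed_subset ?_ fun θ hθ i _ => hθ.1 i
  simp only [Set.ofPred_and, Set.ofPred_forall]
  refine (isClosed_iInter fun i => hΘ.isClosed.preimage (continuous_apply i)).inter ?_
  exact isClosed_iInter fun i => isClosed_iInter fun i' => isClosed_iInter fun _ =>
    isClosed_le continuous_const ((continuous_apply i).dist (continuous_apply i'))

theorem continuous_toLpLin_apply {X R m n : Type*} [TopologicalSpace X] [CommRing R]
    [TopologicalSpace R] [IsTopologicalRing R] [Fintype n] [DecidableEq n] (p q : ENNReal)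
    {A : X → Matrix m n R} (hA : Continuous A) :
    Continuous fun x : X × WithLp p (n → R) => toLpLin p q (A x.1) x.2 :=
  (PiLp.continuous_toLp _ _).comp <|
    (hA.comp continuous_fst).matrix_mulVec ((PiLp.continuous_ofLp _ _).comp continuous_snd)

theorem Function.Injective.of_le_dist {α ι : Type*} [MetricSpace α] {θ : ι → α} {ε : ℝ}
    (hε : 0 < ε) (hθ : ∀ i i', i ≠ i' → ε ≤ dist (θ i) (θ i')) : Function.Injective θ :=
  fun i i' hii' => by_contra fun hne => hε.not_ge (by simpa [hii'] using hθ i i' hne)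

theorem EuclideanSpace.norm_toLp_eq_sqrt {ι : Type*} [Fintype ι] (v : ι → ℝ) :
    ‖WithLp.toLp 2 v‖ = Real.sqrt (∑ i, v i ^ 2) := by
  simp [EuclideanSpace.norm_eq]

theorem stmt_10_general (Θ : Set ℝ) (hΘ : IsCompact Θ) (ε : ℝ) (hε : 0 < ε)
    (j : ℕ) (dv : Fin j → ℕ)
    (D : ℕ) (hD : ∑ i, dv i = D) :
    ∃ c C : ℝ, 0 < c ∧ 0 < C ∧
      ∀ θ : Fin j → ℝ, (∀ i, θ i ∈ Θ) →
        (∀ i i', i ≠ i' → ε ≤ |θ i - θ i'|) →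
        ∀ Λ : ((i : Fin j) × Fin (dv i)) → ℝ,
          c * Real.sqrt (∑ i, Λ i ^ 2) ≤
            Real.sqrt (∑ k, ((Matrix.of fun (k : Fin D) (c' : (i : Fin j) × Fin (dv i)) =>
              if (c'.2 : ℕ) ≤ (k : ℕ)
              then θ c'.1 ^ ((k : ℕ) - (c'.2 : ℕ)) / Nat.factorial ((k : ℕ) - (c'.2 : ℕ))
              else 0).mulVec Λ k) ^ 2) ∧
          Real.sqrt (∑ k, ((Matrix.of fun (k : Fin D) (c' : (i : Fin j) × Fin (dv i)) =>
              if (c'.2 : ℕ) ≤ (k : ℕ)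
              then θ c'.1 ^ ((k : ℕ) - (c'.2 : ℕ)) / Nat.factorial ((k : ℕ) - (c'.2 : ℕ))
              else 0).mulVec Λ k) ^ 2) ≤
            C * Real.sqrt (∑ i, Λ i ^ 2) := by
  have hinj : ∀ θ ∈ {θ : Fin j → ℝ | (∀ i, θ i ∈ Θ) ∧ ∀ i i', i ≠ i' → ε ≤ dist (θ i) (θ i')},
      Function.Injective (toLpLin 2 2 (confluentVandermonde dv D θ)) := fun θ hθ =>
    (WithLp.linearEquiv 2 ℝ _).symm.injective.comp <|
      (mulVec_injective_confluentVandermonde (Function.Injective.of_le_dist hε hθ.2) hD).comp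
        (WithLp.linearEquiv 2 ℝ _).injective
  obtain ⟨c, C, hc, hC, hbound⟩ := (isCompact_setOf_separated hΘ ε).exists_pos_bounds_of_injective
    _ (continuous_toLpLin_apply 2 2 (continuous_confluentVandermonde dv D)) hinj
  refine ⟨c, C, hc, hC, fun θ hθΘ hθsep Λ => ?_⟩
  have h := hbound θ ⟨hθΘ, by simpa only [Real.dist_eq] using hθsep⟩ (WithLp.toLp 2 Λ)
  rw [toLpLin_toLp, EuclideanSpace.norm_toLp_eq_sqrt, EuclideanSpace.norm_toLp_eq_sqrt] at h
  exact h

/-- Corollary: uniform bounds for `ε`-separated support points: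
there are constants `0 < c`, `0 < C` such that for every `ε`-separated `(θ₁,…,θ_j) ∈ Θ^j`
and every `Λ ∈ ℝ^d`, `c‖Λ‖ ≤ ‖A(θ₁,…,θ_j)Λ‖ ≤ C‖Λ‖` in Euclidean norm. -/
theorem stmt_10 (Θ : Set ℝ) (hΘ : IsCompact Θ) (ε : ℝ) (hε : 0 < ε)
    (j : ℕ) (hj : 1 ≤ j) (dv : Fin j → ℕ) (hdv : ∀ i, 1 ≤ dv i)
    (D : ℕ) (hD : ∑ i, dv i = D) :
    ∃ c C : ℝ, 0 < c ∧ 0 < C ∧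
      ∀ θ : Fin j → ℝ, (∀ i, θ i ∈ Θ) →
        (∀ i i', i ≠ i' → ε ≤ |θ i - θ i'|) →
        ∀ Λ : ((i : Fin j) × Fin (dv i)) → ℝ,
          c * Real.sqrt (∑ i, Λ i ^ 2) ≤
            Real.sqrt (∑ k, ((Matrix.of fun (k : Fin D) (c' : (i : Fin j) × Fin (dv i)) =>
              if (c'.2 : ℕ) ≤ (k : ℕ)
              then θ c'.1 ^ ((k : ℕ) - (c'.2 : ℕ)) / Nat.factorial ((k : ℕ) - (c'.2 : ℕ))
              else 0).mulVec Λ k) ^ 2) ∧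
          Real.sqrt (∑ k, ((Matrix.of fun (k : Fin D) (c' : (i : Fin j) × Fin (dv i)) =>
              if (c'.2 : ℕ) ≤ (k : ℕ)
              then θ c'.1 ^ ((k : ℕ) - (c'.2 : ℕ)) / Nat.factorial ((k : ℕ) - (c'.2 : ℕ))
              else 0).mulVec Λ k) ^ 2) ≤
            C * Real.sqrt (∑ i, Λ i ^ 2) :=
  stmt_10_general Θ hΘ ε hε j dv D hD
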